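/- Assume κ < 1. Let x̂, û ∈ C^{1,−} be two forcing paths, and let Z = (X_Z, Y_Z) ∈ C^− be the unique fixed point of J_{x̂,ξ} and W = (X_W, Y_W) ∈ C^− the unique fixed point of J_{û,ξ} (same ξ ∈ H₂). Then ‖Z − W‖ ≤ (κ/(1−κ)) ‖x̂ − û‖₁. -/

import Mathlib

open MeasureTheory

section Helpers

open Set Real

lemma integrableOn_exp_mul_Iic' {a : ℝ} (ha : 0 < a) (t : ℝ) :
    IntegrableOn (fun s => Real.exp (a * s)) (Set.Iic t) := by
  rw [← integrable_indicator_iff measurableSet_Iic]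
  have : (Set.Iic t).indicator (fun s => Real.exp (a * s))
      = fun x => (Set.Iic (a * t)).indicator Real.exp (a * x) := by
    ext x
    have : (fun x : ℝ => a * x) ⁻¹' Set.Iic (a * t) = Set.Iic t := by
      rw [Set.preimage_const_mul_Iic₀ _ ha, mul_div_cancel_left₀ _ ha.ne']
    calc (Set.Iic t).indicator (fun s => Real.exp (a * s)) x
        = ((fun x : ℝ => a * x) ⁻¹' Set.Iic (a * t)).indicator
            (Real.exp ∘ (fun x : ℝ => a * x)) x := by rw [this]; try rfl
      _ = _ := by rw [Set.indicator_comp_right]; try rfl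
  rw [this, integrable_comp_mul_left_iff _ ha.ne',
    integrable_indicator_iff measurableSet_Iic]
  exact integrableOn_exp_Iic _

lemma integral_exp_mul_Iic' {a : ℝ} (ha : 0 < a) (t : ℝ) :
    ∫ s in Set.Iic t, Real.exp (a * s) = a⁻¹ * Real.exp (a * t) := by
  rw [← integral_indicator measurableSet_Iic]
  have : (Set.Iic t).indicator (fun s => Real.exp (a * s))
      = fun x => (Set.Iic (a * t)).indicator Real.exp (a * x) := by
    ext x
    have : (fun x : ℝ => a * x) ⁻¹' Set.Iic (a * t) = Set.Iic t := by
      rw [Set.preimage_const_mul_Iic₀ _ ha, mul_div_cancel_left₀ _ ha.ne']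
    calc (Set.Iic t).indicator (fun s => Real.exp (a * s)) x
        = ((fun x : ℝ => a * x) ⁻¹' Set.Iic (a * t)).indicator
            (Real.exp ∘ (fun x : ℝ => a * x)) x := by rw [this]; try rfl
      _ = _ := by rw [Set.indicator_comp_right]; try rfl
  rw [this, MeasureTheory.Measure.integral_comp_mul_left
    ((Set.Iic (a * t)).indicator Real.exp) a,
    integral_indicator measurableSet_Iic, integral_exp_Iic, smul_eq_mul,
    abs_of_pos (inv_pos.2 ha)]

lemma integral_exp_mul_interval (c : ℝ) (hc : c ≠ 0) (a b : ℝ) :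
    ∫ s in a..b, Real.exp (c * s) = (Real.exp (c * b) - Real.exp (c * a)) / c := by
  rw [intervalIntegral.integral_comp_mul_left Real.exp hc, integral_exp, smul_eq_mul]
  ring

lemma contOn_apply {H : Type*} [NormedAddCommGroup H] [NormedSpace ℝ H]
    (T : ℝ → H →L[ℝ] H) {A B : Set ℝ} {C : ℝ} (hC : 0 < C)
    (hb : ∀ r ∈ B, ∀ x : H, ‖T r x‖ ≤ C * ‖x‖)
    (hc : ∀ x : H, ContinuousOn (fun r => T r x) B)
    {r : ℝ → ℝ} (hr : ContinuousOn r A) (hrB : ∀ s ∈ A, r s ∈ B)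
    {F : ℝ → H} (hF : ContinuousOn F A) :
    ContinuousOn (fun s => T (r s) (F s)) A := by
  intro s₀ hs₀
  rw [Metric.continuousWithinAt_iff]
  intro δ hδ
  have hF0 := hF s₀ hs₀
  rw [Metric.continuousWithinAt_iff] at hF0
  obtain ⟨δ₁, hδ₁, h1⟩ := hF0 (δ / (2 * C)) (by positivity)
  have hcomp : ContinuousWithinAt (fun s => T (r s) (F s₀)) A s₀ :=
    (hc (F s₀) (r s₀) (hrB s₀ hs₀)).comp (hr s₀ hs₀) (fun s hs => hrB s hs)
  rw [Metric.continuousWithinAt_iff] at hcomp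
  obtain ⟨δ₂, hδ₂, h2⟩ := hcomp (δ / 2) (by positivity)
  refine ⟨min δ₁ δ₂, lt_min hδ₁ hδ₂, fun s hs hdist => ?_⟩
  have hd1 := h1 hs (lt_of_lt_of_le hdist (min_le_left _ _))
  have hd2 := h2 hs (lt_of_lt_of_le hdist (min_le_right _ _))
  have key : dist (T (r s) (F s)) (T (r s₀) (F s₀)) ≤
      C * dist (F s) (F s₀) + dist (T (r s) (F s₀)) (T (r s₀) (F s₀)) := by
    calc dist (T (r s) (F s)) (T (r s₀) (F s₀))
        ≤ dist (T (r s) (F s)) (T (r s) (F s₀)) +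
          dist (T (r s) (F s₀)) (T (r s₀) (F s₀)) := dist_triangle _ _ _
      _ ≤ C * dist (F s) (F s₀) + dist (T (r s) (F s₀)) (T (r s₀) (F s₀)) := by
          gcongr
          rw [dist_eq_norm, ← map_sub, dist_eq_norm]
          exact hb _ (hrB s hs) _
  have : C * dist (F s) (F s₀) < δ / 2 := by
    have := mul_lt_mul_of_pos_left hd1 hC
    calc C * dist (F s) (F s₀) < C * (δ / (2 * C)) := this
      _ = δ / 2 := by field_simp
  linarith [key]

end Helpers

/-- The weighted sup-norm `‖φ‖ = sup_{t ≤ 0} e^{w t} ‖φ(t)‖` on paths `(-∞,0] → H`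
(with weight `w = ρ/ε`). -/
noncomputable def wnorm {H : Type*} [NormedAddCommGroup H] (w : ℝ) (φ : ℝ → H) : ℝ :=
  ⨆ t : Set.Iic (0:ℝ), Real.exp (w * t.1) * ‖φ t.1‖

/-- Membership in the weighted space `C⁻_w`: continuity on `(-∞,0]` together with
finiteness of the weighted sup-norm `sup_{t ≤ 0} e^{w t} ‖φ(t)‖`. -/
def MemCminus {H : Type*} [NormedAddCommGroup H] (w : ℝ) (φ : ℝ → H) : Prop :=
  ContinuousOn φ (Set.Iic 0) ∧
    BddAbove (Set.range (fun t : Set.Iic (0:ℝ) => Real.exp (w * t.1) * ‖φ t.1‖))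

/-- `(X, Y)` is a fixed point of the Lyapunov–Perron operator `J_{x̂,ξ}` in the weighted
space `C⁻_w`: both components lie in `C⁻_w` and satisfy the Lyapunov–Perron equations
for all `t ≤ 0`. -/
def IsLPFixedPoint {H₁ H₂ : Type*}
    [NormedAddCommGroup H₁] [NormedSpace ℝ H₁] [NormedAddCommGroup H₂] [NormedSpace ℝ H₂]
    (S : ℝ → H₁ →L[ℝ] H₁) (G : ℝ → H₂ →L[ℝ] H₂)
    (f : H₁ × H₂ → H₁) (g : H₁ × H₂ → H₂)
    (ε w : ℝ) (xhat : ℝ → H₁) (ξ : H₂) (X : ℝ → H₁) (Y : ℝ → H₂) : Prop :=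
  MemCminus w X ∧ MemCminus w Y ∧
    ∀ t : ℝ, t ≤ 0 →
      X t = ε⁻¹ • ∫ s in Set.Iic t, S ((t - s) / ε) (f (X s + xhat s, Y s)) ∧
      Y t = G t ξ + ∫ s in (0:ℝ)..t, G (t - s) (g (X s + xhat s, Y s))

section WnormLemmas

variable {H : Type*} [NormedAddCommGroup H]

lemma wnorm_nonneg (w : ℝ) (φ : ℝ → H) : 0 ≤ wnorm w φ :=
  Real.iSup_nonneg fun t => by positivity

lemma le_wnorm {w : ℝ} {φ : ℝ → H}
    (hb : BddAbove (Set.range fun t : Set.Iic (0:ℝ) => Real.exp (w * t.1) * ‖φ t.1‖))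
    {t : ℝ} (ht : t ≤ 0) : Real.exp (w * t) * ‖φ t‖ ≤ wnorm w φ :=
  le_ciSup hb (⟨t, ht⟩ : Set.Iic (0:ℝ))

lemma norm_le_wnorm {w : ℝ} {φ : ℝ → H}
    (hb : BddAbove (Set.range fun t : Set.Iic (0:ℝ) => Real.exp (w * t.1) * ‖φ t.1‖))
    {t : ℝ} (ht : t ≤ 0) : ‖φ t‖ ≤ Real.exp (-(w * t)) * wnorm w φ := by
  have h := le_wnorm hb ht
  calc ‖φ t‖ = Real.exp (-(w * t)) * (Real.exp (w * t) * ‖φ t‖) := by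
        rw [← mul_assoc, ← Real.exp_add]; simp
    _ ≤ Real.exp (-(w * t)) * wnorm w φ :=
        mul_le_mul_of_nonneg_left h (Real.exp_pos _).le

lemma wnorm_le {w M : ℝ} {φ : ℝ → H}
    (h : ∀ t : ℝ, t ≤ 0 → Real.exp (w * t) * ‖φ t‖ ≤ M) : wnorm w φ ≤ M := by
  haveI : Nonempty (Set.Iic (0:ℝ)) := ⟨⟨0, Set.self_mem_Iic⟩⟩
  exact ciSup_le fun t => h t.1 t.2

lemma bddAbove_sub {w : ℝ} {φ ψ : ℝ → H}
    (hφ : BddAbove (Set.range fun t : Set.Iic (0:ℝ) => Real.exp (w * t.1) * ‖φ t.1‖))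
    (hψ : BddAbove (Set.range fun t : Set.Iic (0:ℝ) => Real.exp (w * t.1) * ‖ψ t.1‖)) :
    BddAbove (Set.range fun t : Set.Iic (0:ℝ) =>
      Real.exp (w * t.1) * ‖(fun u => φ u - ψ u) t.1‖) := by
  refine ⟨wnorm w φ + wnorm w ψ, ?_⟩
  rintro x ⟨t, rfl⟩
  calc Real.exp (w * t.1) * ‖φ t.1 - ψ t.1‖
      ≤ Real.exp (w * t.1) * ‖φ t.1‖ + Real.exp (w * t.1) * ‖ψ t.1‖ := by
        rw [← mul_add]
        exact mul_le_mul_of_nonneg_left (norm_sub_le _ _) (Real.exp_pos _).le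
    _ ≤ wnorm w φ + wnorm w ψ := add_le_add (le_wnorm hφ t.2) (le_wnorm hψ t.2)

end WnormLemmas

set_option maxHeartbeats 2000000 in
/-- Assume `κ = K/(γ₁-ρ) + εK/(ρ-εγ₂) < 1`. Let `x̂, û ∈ C^{1,-}` be
two forcing paths and `Z = (X_Z, Y_Z)`, `W = (X_W, Y_W)` the unique fixed points of
`J_{x̂,ξ}` and `J_{û,ξ}` (same `ξ`). Then `‖Z - W‖ ≤ (κ/(1-κ)) ‖x̂ - û‖₁`. -/
theorem stmt8
    {H₁ H₂ : Type*}
    [NormedAddCommGroup H₁] [InnerProductSpace ℝ H₁] [CompleteSpace H₁]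
    [TopologicalSpace.SeparableSpace H₁]
    [NormedAddCommGroup H₂] [InnerProductSpace ℝ H₂] [CompleteSpace H₂]
    [TopologicalSpace.SeparableSpace H₂]
    (S : ℝ → H₁ →L[ℝ] H₁) (G : ℝ → H₂ →L[ℝ] H₂)
    (γ₁ γ₂ : ℝ) (hγ₁ : 0 < γ₁) (hγ₂ : 0 < γ₂)
    (hS0 : S 0 = 1)
    (hSadd : ∀ t s : ℝ, 0 ≤ t → 0 ≤ s → S (t + s) = (S t).comp (S s))
    (hScont : ∀ x : H₁, ContinuousOn (fun t : ℝ => S t x) (Set.Ici 0))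
    (hSdecay : ∀ t : ℝ, 0 ≤ t → ∀ x : H₁, ‖S t x‖ ≤ Real.exp (-γ₁ * t) * ‖x‖)
    (hG0 : G 0 = 1)
    (hGadd : ∀ t s : ℝ, G (t + s) = (G t).comp (G s))
    (hGcont : ∀ y : H₂, Continuous fun t : ℝ => G t y)
    (hGdecay : ∀ t : ℝ, t ≤ 0 → ∀ y : H₂, ‖G t y‖ ≤ Real.exp (-γ₂ * t) * ‖y‖)
    (f : H₁ × H₂ → H₁) (g : H₁ × H₂ → H₂) (K : ℝ) (hK : 0 < K)
    (hf : ∀ p q : H₁ × H₂, ‖f p - f q‖ ≤ K * (‖p.1 - q.1‖ + ‖p.2 - q.2‖))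
    (hg : ∀ p q : H₁ × H₂, ‖g p - g q‖ ≤ K * (‖p.1 - q.1‖ + ‖p.2 - q.2‖))
    (hf0 : f (0, 0) = 0) (hg0 : g (0, 0) = 0)
    (ε ρ : ℝ) (hε : 0 < ε) (hρ : 0 < ρ)
    (hgap : K < γ₁ - ρ) (hρε : 0 < ρ - ε * γ₂)
    (hκ : K / (γ₁ - ρ) + ε * K / (ρ - ε * γ₂) < 1)
    (xhat uhat : ℝ → H₁)
    (hxhat : MemCminus (ρ / ε) xhat) (huhat : MemCminus (ρ / ε) uhat)
    (ξ : H₂) (XZ XW : ℝ → H₁) (YZ YW : ℝ → H₂)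
    (hZ : IsLPFixedPoint S G f g ε (ρ / ε) xhat ξ XZ YZ)
    (hW : IsLPFixedPoint S G f g ε (ρ / ε) uhat ξ XW YW) :
    wnorm (ρ / ε) (fun t => XZ t - XW t) + wnorm (ρ / ε) (fun t => YZ t - YW t) ≤
      (K / (γ₁ - ρ) + ε * K / (ρ - ε * γ₂)) /
          (1 - (K / (γ₁ - ρ) + ε * K / (ρ - ε * γ₂))) *
        wnorm (ρ / ε) (fun t => xhat t - uhat t) := by
  classical
  obtain ⟨⟨hXZc, hXZb⟩, ⟨hYZc, hYZb⟩, hZeq⟩ := hZ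
  obtain ⟨⟨hXWc, hXWb⟩, ⟨hYWc, hYWb⟩, hWeq⟩ := hW
  obtain ⟨hxc, hxb⟩ := hxhat
  obtain ⟨huc, hub⟩ := huhat
  have hγρ : 0 < γ₁ - ρ := by linarith
  set w : ℝ := ρ / ε with hw
  have hwpos : 0 < w := div_pos hρ hε
  have hwγ : γ₂ < w := by rw [hw, lt_div_iff₀ hε]; nlinarith
  -- continuity of f and g
  have hfc : Continuous f := by
    refine (LipschitzWith.of_dist_le_mul (K := Real.toNNReal (2 * K)) fun p q => ?_).continuous
    rw [Real.coe_toNNReal _ (by positivity)]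
    have h1 : ‖p.1 - q.1‖ ≤ dist p q := by
      rw [← dist_eq_norm, Prod.dist_eq]; exact le_max_left _ _
    have h2 : ‖p.2 - q.2‖ ≤ dist p q := by
      rw [← dist_eq_norm, Prod.dist_eq]; exact le_max_right _ _
    calc dist (f p) (f q) = ‖f p - f q‖ := dist_eq_norm _ _
      _ ≤ K * (‖p.1 - q.1‖ + ‖p.2 - q.2‖) := hf p q
      _ ≤ K * (dist p q + dist p q) :=
          mul_le_mul_of_nonneg_left (add_le_add h1 h2) hK.le
      _ = 2 * K * dist p q := by ring
  have hgc : Continuous g := by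
    refine (LipschitzWith.of_dist_le_mul (K := Real.toNNReal (2 * K)) fun p q => ?_).continuous
    rw [Real.coe_toNNReal _ (by positivity)]
    have h1 : ‖p.1 - q.1‖ ≤ dist p q := by
      rw [← dist_eq_norm, Prod.dist_eq]; exact le_max_left _ _
    have h2 : ‖p.2 - q.2‖ ≤ dist p q := by
      rw [← dist_eq_norm, Prod.dist_eq]; exact le_max_right _ _
    calc dist (g p) (g q) = ‖g p - g q‖ := dist_eq_norm _ _
      _ ≤ K * (‖p.1 - q.1‖ + ‖p.2 - q.2‖) := hg p q
      _ ≤ K * (dist p q + dist p q) :=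
          mul_le_mul_of_nonneg_left (add_le_add h1 h2) hK.le
      _ = 2 * K * dist p q := by ring
  -- the three weighted norms
  have hPb := bddAbove_sub hXZb hXWb
  have hQb := bddAbove_sub hYZb hYWb
  have hDb := bddAbove_sub hxb hub
  set P := wnorm w (fun t => XZ t - XW t) with hP
  set Q := wnorm w (fun t => YZ t - YW t) with hQ
  set D := wnorm w (fun t => xhat t - uhat t) with hD
  have hp0 : 0 ≤ P := by rw [hP]; exact wnorm_nonneg _ _
  have hq0 : 0 ≤ Q := by rw [hQ]; exact wnorm_nonneg _ _
  have hd0 : 0 ≤ D := by rw [hD]; exact wnorm_nonneg _ _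
  set M := P + D + Q with hM
  clear_value w P Q D M
  have hM0 : 0 ≤ M := by rw [hM]; linarith
  -- pointwise bounds on the differences of the nonlinearities
  have hsum : ∀ s : ℝ, s ≤ 0 →
      ‖(XZ s + xhat s) - (XW s + uhat s)‖ + ‖YZ s - YW s‖ ≤ M * Real.exp (-(w * s)) := by
    intro s hs
    have h1 : ‖XZ s - XW s‖ ≤ Real.exp (-(w * s)) * P := by
      rw [hP]; exact norm_le_wnorm (φ := fun u => XZ u - XW u) hPb hs
    have h2 : ‖xhat s - uhat s‖ ≤ Real.exp (-(w * s)) * D := by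
      rw [hD]; exact norm_le_wnorm (φ := fun u => xhat u - uhat u) hDb hs
    have h3 : ‖YZ s - YW s‖ ≤ Real.exp (-(w * s)) * Q := by
      rw [hQ]; exact norm_le_wnorm (φ := fun u => YZ u - YW u) hQb hs
    have h4 : ‖(XZ s + xhat s) - (XW s + uhat s)‖ ≤ ‖XZ s - XW s‖ + ‖xhat s - uhat s‖ := by
      have he : (XZ s + xhat s) - (XW s + uhat s) = (XZ s - XW s) + (xhat s - uhat s) := by
        abel
      rw [he]; exact norm_add_le _ _
    rw [hM]
    nlinarith [Real.exp_pos (-(w * s))]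
  have hsubf : ∀ s : ℝ, s ≤ 0 →
      ‖f (XZ s + xhat s, YZ s) - f (XW s + uhat s, YW s)‖ ≤ K * M * Real.exp (-(w * s)) := by
    intro s hs
    have h0 := hf (XZ s + xhat s, YZ s) (XW s + uhat s, YW s)
    dsimp only at h0
    calc ‖f (XZ s + xhat s, YZ s) - f (XW s + uhat s, YW s)‖
        ≤ K * (‖(XZ s + xhat s) - (XW s + uhat s)‖ + ‖YZ s - YW s‖) := h0
      _ ≤ K * (M * Real.exp (-(w * s))) :=
          mul_le_mul_of_nonneg_left (hsum s hs) hK.le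
      _ = K * M * Real.exp (-(w * s)) := (mul_assoc _ _ _).symm
  have hsubg : ∀ s : ℝ, s ≤ 0 →
      ‖g (XZ s + xhat s, YZ s) - g (XW s + uhat s, YW s)‖ ≤ K * M * Real.exp (-(w * s)) := by
    intro s hs
    have h0 := hg (XZ s + xhat s, YZ s) (XW s + uhat s, YW s)
    dsimp only at h0
    calc ‖g (XZ s + xhat s, YZ s) - g (XW s + uhat s, YW s)‖
        ≤ K * (‖(XZ s + xhat s) - (XW s + uhat s)‖ + ‖YZ s - YW s‖) := h0
      _ ≤ K * (M * Real.exp (-(w * s))) :=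
          mul_le_mul_of_nonneg_left (hsum s hs) hK.le
      _ = K * M * Real.exp (-(w * s)) := (mul_assoc _ _ _).symm
  -- single-path growth bound for `f`
  have hFone : ∀ (X xh : ℝ → H₁) (Y : ℝ → H₂),
      BddAbove (Set.range fun t : Set.Iic (0:ℝ) => Real.exp (w * t.1) * ‖X t.1‖) →
      BddAbove (Set.range fun t : Set.Iic (0:ℝ) => Real.exp (w * t.1) * ‖xh t.1‖) →
      BddAbove (Set.range fun t : Set.Iic (0:ℝ) => Real.exp (w * t.1) * ‖Y t.1‖) →
      ∀ s : ℝ, s ≤ 0 → ‖f (X s + xh s, Y s)‖ ≤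
        K * (wnorm w X + wnorm w xh + wnorm w Y) * Real.exp (-(w * s)) := by
    intro X xh Y hX hxh hY s hs
    have h0 := hf (X s + xh s, Y s) (0, 0)
    rw [hf0] at h0
    dsimp only at h0
    rw [sub_zero, sub_zero, sub_zero] at h0
    have h1 : ‖X s‖ ≤ Real.exp (-(w * s)) * wnorm w X := norm_le_wnorm hX hs
    have h2 : ‖xh s‖ ≤ Real.exp (-(w * s)) * wnorm w xh := norm_le_wnorm hxh hs
    have h3 : ‖Y s‖ ≤ Real.exp (-(w * s)) * wnorm w Y := norm_le_wnorm hY hs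
    have h4 : ‖X s + xh s‖ ≤ ‖X s‖ + ‖xh s‖ := norm_add_le _ _
    calc ‖f (X s + xh s, Y s)‖ ≤ K * (‖X s + xh s‖ + ‖Y s‖) := h0
      _ ≤ K * ((wnorm w X + wnorm w xh + wnorm w Y) * Real.exp (-(w * s))) :=
          mul_le_mul_of_nonneg_left (by nlinarith) hK.le
      _ = K * (wnorm w X + wnorm w xh + wnorm w Y) * Real.exp (-(w * s)) :=
          (mul_assoc _ _ _).symm
  -- `S` is a contraction semigroup
  have ha : (0:ℝ) < (γ₁ - ρ) / ε := div_pos hγρ hε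
  have hSnorm : ∀ r ∈ Set.Ici (0:ℝ), ∀ x : H₁, ‖S r x‖ ≤ 1 * ‖x‖ := by
    intro r hr x
    have hr0 : (0:ℝ) ≤ r := Set.mem_Ici.mp hr
    have h2 : Real.exp (-γ₁ * r) ≤ 1 := by
      have h2' : Real.exp (-γ₁ * r) ≤ Real.exp 0 :=
        Real.exp_le_exp.mpr (by nlinarith)
      rwa [Real.exp_zero] at h2'
    calc ‖S r x‖ ≤ Real.exp (-γ₁ * r) * ‖x‖ := hSdecay r hr0 x
      _ ≤ 1 * ‖x‖ := mul_le_mul_of_nonneg_right h2 (norm_nonneg x)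
  have hScontI : ∀ t : ℝ, t ≤ 0 → ∀ F : ℝ → H₁, ContinuousOn F (Set.Iic 0) →
      ContinuousOn (fun s => S ((t - s) / ε) (F s)) (Set.Iic t) := by
    intro t ht F hF
    refine contOn_apply S one_pos hSnorm hScont (r := fun s => (t - s) / ε)
      ((continuousOn_const.sub continuousOn_id).div_const ε) ?_
      (hF.mono (Set.Iic_subset_Iic.mpr ht))
    intro s hs
    exact Set.mem_Ici.mpr (div_nonneg (by linarith [Set.mem_Iic.mp hs]) hε.le)
  -- integrability of the `S`-integrands
  have hIntF : ∀ t : ℝ, t ≤ 0 → ∀ (F : ℝ → H₁) (C : ℝ), ContinuousOn F (Set.Iic 0) →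
      (∀ s : ℝ, s ≤ 0 → ‖F s‖ ≤ C * Real.exp (-(w * s))) →
      IntegrableOn (fun s => S ((t - s) / ε) (F s)) (Set.Iic t) := by
    intro t ht F C hFc hFb
    refine Integrable.mono' ((integrableOn_exp_mul_Iic' ha t).const_mul
        (C * Real.exp (-(γ₁ / ε) * t)))
      ((hScontI t ht F hFc).aestronglyMeasurable measurableSet_Iic) ?_
    rw [ae_restrict_iff' measurableSet_Iic]
    refine Filter.Eventually.of_forall fun s hs => ?_
    have hs0 : s ≤ 0 := le_trans (Set.mem_Iic.mp hs) ht
    have hts : 0 ≤ (t - s) / ε :=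
      div_nonneg (by linarith [Set.mem_Iic.mp hs]) hε.le
    have hA : Real.exp (-γ₁ * ((t - s) / ε)) * Real.exp (-(ρ / ε * s)) =
        Real.exp (-(γ₁ / ε) * t) * Real.exp ((γ₁ - ρ) / ε * s) := by
      rw [← Real.exp_add, ← Real.exp_add]
      congr 1
      field_simp
      ring
    calc ‖S ((t - s) / ε) (F s)‖
        ≤ Real.exp (-γ₁ * ((t - s) / ε)) * ‖F s‖ := hSdecay _ hts _
      _ ≤ Real.exp (-γ₁ * ((t - s) / ε)) * (C * Real.exp (-(w * s))) :=
          mul_le_mul_of_nonneg_left (hFb s hs0) (Real.exp_pos _).le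
      _ = C * Real.exp (-(γ₁ / ε) * t) * Real.exp ((γ₁ - ρ) / ε * s) := by
          rw [hw]
          linear_combination C * hA
  -- the X-component estimate
  have hPM : P ≤ K / (γ₁ - ρ) * M := by
    rw [hP]
    apply wnorm_le
    intro t ht
    have hc1 : ContinuousOn (fun s => f (XZ s + xhat s, YZ s)) (Set.Iic 0) :=
      hfc.comp_continuousOn ((hXZc.add hxc).prodMk hYZc)
    have hc2 : ContinuousOn (fun s => f (XW s + uhat s, YW s)) (Set.Iic 0) :=
      hfc.comp_continuousOn ((hXWc.add huc).prodMk hYWc)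
    have hZint := hIntF t ht (fun s => f (XZ s + xhat s, YZ s))
      (K * (wnorm w XZ + wnorm w xhat + wnorm w YZ)) hc1 (hFone XZ xhat YZ hXZb hxb hYZb)
    have hWint := hIntF t ht (fun s => f (XW s + uhat s, YW s))
      (K * (wnorm w XW + wnorm w uhat + wnorm w YW)) hc2 (hFone XW uhat YW hXWb hub hYWb)
    have heq : XZ t - XW t = ε⁻¹ • ∫ s in Set.Iic t,
        (S ((t - s) / ε) (f (XZ s + xhat s, YZ s)) -
          S ((t - s) / ε) (f (XW s + uhat s, YW s))) := by
      rw [(hZeq t ht).1, (hWeq t ht).1, ← smul_sub, integral_sub hZint hWint]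
    rw [heq, norm_smul, norm_inv, Real.norm_eq_abs, abs_of_pos hε]
    have hbnd : ‖∫ s in Set.Iic t,
        (S ((t - s) / ε) (f (XZ s + xhat s, YZ s)) -
          S ((t - s) / ε) (f (XW s + uhat s, YW s)))‖ ≤
        ∫ s in Set.Iic t, (K * M * Real.exp (-(γ₁ / ε) * t)) * Real.exp ((γ₁ - ρ) / ε * s) := by
      refine norm_integral_le_of_norm_le ((integrableOn_exp_mul_Iic' ha t).const_mul _) ?_
      rw [ae_restrict_iff' measurableSet_Iic]
      refine Filter.Eventually.of_forall fun s hs => ?_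
      have hs0 : s ≤ 0 := le_trans (Set.mem_Iic.mp hs) ht
      have hts : 0 ≤ (t - s) / ε :=
        div_nonneg (by linarith [Set.mem_Iic.mp hs]) hε.le
      have hA : Real.exp (-γ₁ * ((t - s) / ε)) * Real.exp (-(ρ / ε * s)) =
          Real.exp (-(γ₁ / ε) * t) * Real.exp ((γ₁ - ρ) / ε * s) := by
        rw [← Real.exp_add, ← Real.exp_add]
        congr 1
        ring
      calc ‖S ((t - s) / ε) (f (XZ s + xhat s, YZ s)) -
            S ((t - s) / ε) (f (XW s + uhat s, YW s))‖
          = ‖S ((t - s) / ε) (f (XZ s + xhat s, YZ s) - f (XW s + uhat s, YW s))‖ := by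
            rw [map_sub]
        _ ≤ Real.exp (-γ₁ * ((t - s) / ε)) *
            ‖f (XZ s + xhat s, YZ s) - f (XW s + uhat s, YW s)‖ := hSdecay _ hts _
        _ ≤ Real.exp (-γ₁ * ((t - s) / ε)) * (K * M * Real.exp (-(w * s))) :=
            mul_le_mul_of_nonneg_left (hsubf s hs0) (Real.exp_pos _).le
        _ = (K * M * Real.exp (-(γ₁ / ε) * t)) * Real.exp ((γ₁ - ρ) / ε * s) := by
            rw [hw]
            linear_combination (K * M) * hA
    have hval : ∫ s in Set.Iic t, (K * M * Real.exp (-(γ₁ / ε) * t)) *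
        Real.exp ((γ₁ - ρ) / ε * s) =
        (K * M * Real.exp (-(γ₁ / ε) * t)) * (((γ₁ - ρ) / ε)⁻¹ *
          Real.exp ((γ₁ - ρ) / ε * t)) := by
      rw [MeasureTheory.integral_const_mul, integral_exp_mul_Iic' ha]
    rw [hval] at hbnd
    have h4 := mul_le_mul_of_nonneg_left
      (mul_le_mul_of_nonneg_left hbnd (inv_pos.2 hε).le) (Real.exp_pos (w * t)).le
    refine le_trans h4 (le_of_eq ?_)
    have hexp : Real.exp (w * t) * Real.exp (-(γ₁ / ε) * t) *
        Real.exp ((γ₁ - ρ) / ε * t) = 1 := by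
      rw [← Real.exp_add, ← Real.exp_add, hw,
        show ρ / ε * t + -(γ₁ / ε) * t + (γ₁ - ρ) / ε * t = 0 by ring,
        Real.exp_zero]
    have hinv : ((γ₁ - ρ) / ε)⁻¹ = ε / (γ₁ - ρ) := by rw [inv_div]
    calc Real.exp (w * t) * (ε⁻¹ * (K * M * Real.exp (-(γ₁ / ε) * t) *
          (((γ₁ - ρ) / ε)⁻¹ * Real.exp ((γ₁ - ρ) / ε * t))))
        = (Real.exp (w * t) * Real.exp (-(γ₁ / ε) * t) * Real.exp ((γ₁ - ρ) / ε * t)) *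
          (K * M * (ε⁻¹ * (ε / (γ₁ - ρ)))) := by rw [hinv]; ring
      _ = K * M * (ε⁻¹ * (ε / (γ₁ - ρ))) := by rw [hexp, one_mul]
      _ = K / (γ₁ - ρ) * M := by
          rw [show ε⁻¹ * (ε / (γ₁ - ρ)) = (γ₁ - ρ)⁻¹ from by
            rw [div_eq_mul_inv, ← mul_assoc, inv_mul_cancel₀ hε.ne', one_mul],
            div_eq_mul_inv]
          ring
  -- the Y-component estimate
  have hQM : Q ≤ ε * K / (ρ - ε * γ₂) * M := by
    rw [hQ]
    apply wnorm_le
    intro t ht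
    set c : ℝ := w - γ₂ with hc
    clear_value c
    have hcpos : 0 < c := by rw [hc]; linarith
    have hGb : ∀ r ∈ Set.Icc t 0, ∀ y : H₂, ‖G r y‖ ≤ Real.exp (-γ₂ * t) * ‖y‖ := by
      intro r hr y
      have hr' := Set.mem_Icc.mp hr
      refine le_trans (hGdecay r hr'.2 y) (mul_le_mul_of_nonneg_right ?_ (norm_nonneg y))
      exact Real.exp_le_exp.mpr (by nlinarith [hr'.1])
    have hGc' : ∀ y : H₂, ContinuousOn (fun r => G r y) (Set.Icc t 0) :=
      fun y => (hGcont y).continuousOn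
    have hmk : ∀ F : ℝ → H₂, ContinuousOn F (Set.Iic 0) →
        ContinuousOn (fun s => G (t - s) (F s)) (Set.Icc t 0) := by
      intro F hF
      refine contOn_apply G (Real.exp_pos _) hGb hGc' (r := fun s => t - s)
        (continuousOn_const.sub continuousOn_id) ?_
        (hF.mono Set.Icc_subset_Iic_self)
      intro s hs
      have hs' := Set.mem_Icc.mp hs
      refine Set.mem_Icc.mpr ⟨?_, ?_⟩
      · show t ≤ t - s; linarith [hs'.2]
      · show t - s ≤ 0; linarith [hs'.1]
    have hiZ : IntervalIntegrable (fun s => G (t - s) (g (XZ s + xhat s, YZ s)))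
        volume 0 t := by
      apply ContinuousOn.intervalIntegrable
      rw [Set.uIcc_of_ge ht]
      exact hmk _ (hgc.comp_continuousOn ((hXZc.add hxc).prodMk hYZc))
    have hiW : IntervalIntegrable (fun s => G (t - s) (g (XW s + uhat s, YW s)))
        volume 0 t := by
      apply ContinuousOn.intervalIntegrable
      rw [Set.uIcc_of_ge ht]
      exact hmk _ (hgc.comp_continuousOn ((hXWc.add huc).prodMk hYWc))
    have heq : YZ t - YW t = ∫ s in (0:ℝ)..t,
        (G (t - s) (g (XZ s + xhat s, YZ s)) - G (t - s) (g (XW s + uhat s, YW s))) := by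
      rw [(hZeq t ht).2, (hWeq t ht).2, intervalIntegral.integral_sub hiZ hiW]
      abel
    rw [heq]
    have h1 : ‖∫ s in (0:ℝ)..t,
        (G (t - s) (g (XZ s + xhat s, YZ s)) - G (t - s) (g (XW s + uhat s, YW s)))‖ =
        ‖∫ s in t..(0:ℝ),
        (G (t - s) (g (XZ s + xhat s, YZ s)) - G (t - s) (g (XW s + uhat s, YW s)))‖ := by
      rw [intervalIntegral.integral_symm t 0, norm_neg]
    have h2 : ‖∫ s in t..(0:ℝ),
        (G (t - s) (g (XZ s + xhat s, YZ s)) - G (t - s) (g (XW s + uhat s, YW s)))‖ ≤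
        ∫ s in t..(0:ℝ), ‖G (t - s) (g (XZ s + xhat s, YZ s)) -
          G (t - s) (g (XW s + uhat s, YW s))‖ :=
      intervalIntegral.norm_integral_le_integral_norm ht
    have hgcont : Continuous fun s : ℝ => (K * M * Real.exp (-γ₂ * t)) *
        Real.exp (-c * s) := by
      have h0 : Continuous fun s : ℝ => Real.exp (-c * s) :=
        Real.continuous_exp.comp (continuous_const.mul continuous_id)
      exact continuous_const.mul h0
    have h3 : ∫ s in t..(0:ℝ), ‖G (t - s) (g (XZ s + xhat s, YZ s)) -
          G (t - s) (g (XW s + uhat s, YW s))‖ ≤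
        ∫ s in t..(0:ℝ), (K * M * Real.exp (-γ₂ * t)) * Real.exp (-c * s) := by
      refine intervalIntegral.integral_mono_on ht ((hiZ.sub hiW).symm.norm)
        (hgcont.intervalIntegrable t 0) ?_
      intro s hs
      have hs' := Set.mem_Icc.mp hs
      have hs0 : s ≤ 0 := hs'.2
      have hts : t - s ≤ 0 := by linarith [hs'.1]
      have hA : Real.exp (-γ₂ * (t - s)) * Real.exp (-(w * s)) =
          Real.exp (-γ₂ * t) * Real.exp (-c * s) := by
        rw [← Real.exp_add, ← Real.exp_add]
        congr 1
        rw [hc]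
        ring
      calc ‖G (t - s) (g (XZ s + xhat s, YZ s)) - G (t - s) (g (XW s + uhat s, YW s))‖
          = ‖G (t - s) (g (XZ s + xhat s, YZ s) - g (XW s + uhat s, YW s))‖ := by
            rw [map_sub]
        _ ≤ Real.exp (-γ₂ * (t - s)) *
            ‖g (XZ s + xhat s, YZ s) - g (XW s + uhat s, YW s)‖ := hGdecay _ hts _
        _ ≤ Real.exp (-γ₂ * (t - s)) * (K * M * Real.exp (-(w * s))) :=
            mul_le_mul_of_nonneg_left (hsubg s hs0) (Real.exp_pos _).le
        _ = (K * M * Real.exp (-γ₂ * t)) * Real.exp (-c * s) := by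
            linear_combination (K * M) * hA
    have h4 : ∫ s in t..(0:ℝ), (K * M * Real.exp (-γ₂ * t)) * Real.exp (-c * s) =
        (K * M * Real.exp (-γ₂ * t)) *
          ((Real.exp (-c * 0) - Real.exp (-c * t)) / (-c)) := by
      rw [intervalIntegral.integral_const_mul, integral_exp_mul_interval (-c)
        (by linarith) t 0]
    have hbig : Real.exp (w * t) * ‖∫ s in (0:ℝ)..t,
        (G (t - s) (g (XZ s + xhat s, YZ s)) - G (t - s) (g (XW s + uhat s, YW s)))‖ ≤
        Real.exp (w * t) * ((K * M * Real.exp (-γ₂ * t)) *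
          ((Real.exp (-c * 0) - Real.exp (-c * t)) / (-c))) := by
      rw [h1]
      refine mul_le_mul_of_nonneg_left ?_ (Real.exp_pos _).le
      rw [← h4]
      exact le_trans h2 h3
    refine le_trans hbig ?_
    have hexp2 : Real.exp (w * t) * Real.exp (-γ₂ * t) * Real.exp (-c * t) = 1 := by
      rw [← Real.exp_add, ← Real.exp_add,
        show w * t + -γ₂ * t + -c * t = 0 by rw [hc]; ring, Real.exp_zero]
    have hval2 : Real.exp (w * t) * ((K * M * Real.exp (-γ₂ * t)) *
        ((Real.exp (-c * 0) - Real.exp (-c * t)) / (-c))) =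
        K * M / c * (1 - Real.exp (w * t) * Real.exp (-γ₂ * t)) := by
      rw [mul_zero, Real.exp_zero, div_neg, ← neg_div, neg_sub]
      calc Real.exp (w * t) * ((K * M * Real.exp (-γ₂ * t)) *
            ((Real.exp (-c * t) - 1) / c))
          = (Real.exp (w * t) * (K * M * Real.exp (-γ₂ * t)) *
            (Real.exp (-c * t) - 1)) / c := by ring
        _ = (K * M * (1 - Real.exp (w * t) * Real.exp (-γ₂ * t))) / c := by
            rw [show Real.exp (w * t) * (K * M * Real.exp (-γ₂ * t)) *
                (Real.exp (-c * t) - 1) =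
                K * M * (1 - Real.exp (w * t) * Real.exp (-γ₂ * t)) from by
              linear_combination (K * M) * hexp2]
        _ = K * M / c * (1 - Real.exp (w * t) * Real.exp (-γ₂ * t)) := by ring
    rw [hval2]
    have hKMc : 0 ≤ K * M / c := by positivity
    have hone : 1 - Real.exp (w * t) * Real.exp (-γ₂ * t) ≤ 1 := by
      nlinarith [Real.exp_pos (w * t), Real.exp_pos (-γ₂ * t)]
    have h5 : K * M / c * (1 - Real.exp (w * t) * Real.exp (-γ₂ * t)) ≤ K * M / c :=
      by nlinarith
    refine le_trans h5 (le_of_eq ?_)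
    have h6 : ρ / ε - γ₂ = (ρ - ε * γ₂) / ε := by
      rw [sub_div]
      congr 1
      rw [mul_comm, mul_div_assoc, div_self hε.ne', mul_one]
    rw [hc, hw, h6, div_div_eq_mul_div]
    ring
  -- combine
  have hκ1 : 0 < 1 - (K / (γ₁ - ρ) + ε * K / (ρ - ε * γ₂)) := by linarith
  rw [div_mul_eq_mul_div, le_div_iff₀ hκ1]
  rw [hM] at hPM hQM
  nlinarith [hPM, hQM, hp0, hq0, hd0]
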